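/- arXiv:2510.07999 — 2 statements merged into one kernel-verified Lean document; each statement's English description precedes it below -/
import Mathlib

section
/- Let E ⊂ ℝⁿ be a bounded convex set with 0 ∈ Int(E), radii 0 < r_E ≤ R_E with B_{r_E}(0) ⊂ E ⊂ B_{R_E}(0), and for δ ≥ 0 define G_δ(ξ) := ((|ξ|_E − (1+δ))_+ / |ξ|_E) ξ (with G_δ(0) := 0). Then for all ξ, η ∈ ℝⁿ one has |G_δ(ξ) − G_δ(η)| ≤ 3 (R_E/r_E)² |ξ − η|, where |·| is the Euclidean norm. -/
open Set Metric

noncomputable def Gdelta {n : ℕ} (E : Set (EuclideanSpace ℝ (Fin n))) (δ : ℝ)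
    (ξ : EuclideanSpace ℝ (Fin n)) : EuclideanSpace ℝ (Fin n) :=
  (max (gauge E ξ - (1 + δ)) 0 / gauge E ξ) • ξ

theorem Gdelta_lipschitz {n : ℕ} (E : Set (EuclideanSpace ℝ (Fin n)))
    (hconv : Convex ℝ E) (hbdd : Bornology.IsBounded E) (h0 : (0 : EuclideanSpace ℝ (Fin n)) ∈ interior E)
    (r_E R_E : ℝ) (hr : 0 < r_E) (hrR : r_E ≤ R_E)
    (hball₁ : Metric.ball (0 : EuclideanSpace ℝ (Fin n)) r_E ⊆ E)
    (hball₂ : E ⊆ Metric.ball (0 : EuclideanSpace ℝ (Fin n)) R_E)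
    (δ : ℝ) (hδ : 0 ≤ δ) (ξ η : EuclideanSpace ℝ (Fin n)) :
    ‖Gdelta E δ ξ - Gdelta E δ η‖ ≤ 3 * (R_E / r_E) ^ 2 * ‖ξ - η‖ := by
  have hR : 0 < R_E := lt_of_lt_of_le hr hrR
  have habs : Absorbent ℝ E := absorbent_nhds_zero (mem_interior_iff_mem_nhds.mp h0)
  have hub : ∀ x : EuclideanSpace ℝ (Fin n), gauge E x ≤ ‖x‖ / r_E := by
    intro x
    have h1 := gauge_mono (absorbent_ball_zero hr) hball₁ x
    rwa [gauge_ball hr.le] at h1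
  have hlb : ∀ x : EuclideanSpace ℝ (Fin n), ‖x‖ ≤ R_E * gauge E x := by
    intro x
    have h1 := gauge_mono habs hball₂ x
    rw [gauge_ball hR.le] at h1
    rw [div_le_iff₀ hR] at h1
    linarith
  have hsub : ∀ x y : EuclideanSpace ℝ (Fin n),
      gauge E x - gauge E y ≤ ‖x - y‖ / r_E := by
    intro x y
    have h1 : gauge E x ≤ gauge E (x - y) + gauge E y := by
      have := gauge_add_le hconv habs (x - y) y
      simpa using this
    have h2 := hub (x - y)
    linarith
  have hs1 : (1:ℝ) ≤ R_E / r_E := (one_le_div hr).mpr hrR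
  suffices key : ∀ x y : EuclideanSpace ℝ (Fin n), gauge E y ≤ gauge E x →
      ‖Gdelta E δ x - Gdelta E δ y‖ ≤ 3 * (R_E / r_E) ^ 2 * ‖x - y‖ by
    rcases le_total (gauge E η) (gauge E ξ) with h | h
    · exact key ξ η h
    · have := key η ξ h
      rwa [norm_sub_rev, show ‖η - ξ‖ = ‖ξ - η‖ from norm_sub_rev η ξ] at this
  intro x y hxy
  set a : ℝ := 1 + δ with ha
  have ha1 : (1:ℝ) ≤ a := by simp [ha]; linarith
  by_cases hx : gauge E x ≤ a
  · have hy : gauge E y ≤ a := le_trans hxy hx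
    have e1 : Gdelta E δ x = 0 := by
      simp [Gdelta, ← ha, max_eq_right (by linarith : gauge E x - a ≤ 0)]
    have e2 : Gdelta E δ y = 0 := by
      simp [Gdelta, ← ha, max_eq_right (by linarith : gauge E y - a ≤ 0)]
    rw [e1, e2, sub_zero, norm_zero]
    positivity
  push_neg at hx
  have hgx0 : 0 < gauge E x := by linarith
  have hax : a / gauge E x ≤ 1 := (div_le_one hgx0).mpr hx.le
  have e1 : Gdelta E δ x = ((gauge E x - a)/gauge E x) • x := by
    simp [Gdelta, ← ha, max_eq_left (by linarith : (0:ℝ) ≤ gauge E x - a)]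
  have hd := norm_nonneg (x - y)
  by_cases hy : gauge E y ≤ a
  · -- Gdelta y = 0
    have e2 : Gdelta E δ y = 0 := by
      simp [Gdelta, ← ha, max_eq_right (by linarith : gauge E y - a ≤ 0)]
    rw [e1, e2, sub_zero, norm_smul, Real.norm_eq_abs,
      abs_of_nonneg (div_nonneg (by linarith) hgx0.le)]
    have h1 : ((gauge E x - a)/gauge E x) * ‖x‖
        ≤ ((gauge E x - a)/gauge E x) * (R_E * gauge E x) :=
      mul_le_mul_of_nonneg_left (hlb x) (div_nonneg (by linarith) hgx0.le)
    have h2 : ((gauge E x - a)/gauge E x) * (R_E * gauge E x)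
        = R_E * (gauge E x - a) := by field_simp
    have h3 : gauge E x - a ≤ ‖x - y‖ / r_E := by
      have := hsub x y; linarith
    have h4 : R_E * (gauge E x - a) ≤ R_E * (‖x - y‖ / r_E) :=
      mul_le_mul_of_nonneg_left h3 hR.le
    have h5 : R_E * (‖x - y‖ / r_E) = (R_E / r_E) * ‖x - y‖ := by ring
    have h6 : (R_E / r_E) * ‖x - y‖ ≤ 3 * (R_E / r_E) ^ 2 * ‖x - y‖ := by
      nlinarith [mul_nonneg hd (mul_nonneg (by linarith : (0:ℝ) ≤ 3*(R_E/r_E)+2)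
        (by linarith : (0:ℝ) ≤ R_E/r_E - 1))]
    linarith
  push_neg at hy
  have hgy0 : 0 < gauge E y := by linarith
  have e2 : Gdelta E δ y = ((gauge E y - a)/gauge E y) • y := by
    simp [Gdelta, ← ha, max_eq_left (by linarith : (0:ℝ) ≤ gauge E y - a)]
  have hdecomp : Gdelta E δ x - Gdelta E δ y
      = (x - y) - ((a/gauge E x) • (x - y) + (a/gauge E x - a/gauge E y) • y) := by
    rw [e1, e2]
    have c1 : (gauge E x - a)/gauge E x = 1 - a/gauge E x := by field_simp
    have c2 : (gauge E y - a)/gauge E y = 1 - a/gauge E y := by field_simp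
    rw [c1, c2]
    module
  rw [hdecomp]
  have hn1 : ‖(x - y) - ((a/gauge E x) • (x - y) + (a/gauge E x - a/gauge E y) • y)‖
      ≤ ‖x - y‖ + (‖(a/gauge E x) • (x - y)‖ + ‖(a/gauge E x - a/gauge E y) • y‖) :=
    le_trans (norm_sub_le _ _) (by gcongr; exact norm_add_le _ _)
  have hb1 : ‖(a/gauge E x) • (x - y)‖ ≤ ‖x - y‖ := by
    rw [norm_smul, Real.norm_eq_abs, abs_of_nonneg (by positivity : (0:ℝ) ≤ a/gauge E x)]
    nlinarith
  have hcoef : 0 ≤ a/gauge E y - a/gauge E x :=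
    sub_nonneg.mpr (div_le_div_of_nonneg_left (by linarith) hgy0 hxy)
  have hb2 : ‖(a/gauge E x - a/gauge E y) • y‖ ≤ (R_E / r_E) * ‖x - y‖ := by
    rw [norm_smul, Real.norm_eq_abs, abs_sub_comm, abs_of_nonneg hcoef]
    have t1 : (a/gauge E y - a/gauge E x) * ‖y‖
        ≤ (a/gauge E y - a/gauge E x) * (R_E * gauge E y) :=
      mul_le_mul_of_nonneg_left (hlb y) hcoef
    have t2 : (a/gauge E y - a/gauge E x) * (R_E * gauge E y)
        = R_E * (a/gauge E x) * (gauge E x - gauge E y) * (gauge E y / gauge E y) := by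
      field_simp
    rw [div_self hgy0.ne', mul_one] at t2
    have hxy' : 0 ≤ gauge E x - gauge E y := by linarith
    have t3 : R_E * (a/gauge E x) * (gauge E x - gauge E y)
        ≤ R_E * 1 * (gauge E x - gauge E y) := by
      apply mul_le_mul_of_nonneg_right _ hxy'
      exact mul_le_mul_of_nonneg_left hax hR.le
    have t4 : R_E * 1 * (gauge E x - gauge E y) ≤ R_E * (‖x - y‖ / r_E) := by
      rw [mul_one]
      exact mul_le_mul_of_nonneg_left (hsub x y) hR.le
    have t5 : R_E * (‖x - y‖ / r_E) = (R_E / r_E) * ‖x - y‖ := by ring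
    linarith
  have hfin : ‖x - y‖ + (‖x - y‖ + (R_E / r_E) * ‖x - y‖)
      ≤ 3 * (R_E / r_E) ^ 2 * ‖x - y‖ := by
    nlinarith [mul_nonneg hd (mul_nonneg (by linarith : (0:ℝ) ≤ 3*(R_E/r_E)+2)
      (by linarith : (0:ℝ) ≤ R_E/r_E - 1))]
  linarith
end

section
/- Let E ⊂ ℝⁿ be a bounded convex set with 0 ∈ Int(E), radii 0 < r_E ≤ R_E with B_{r_E}(0) ⊂ E ⊂ B_{R_E}(0), let δ > 0, and let G(ξ) := ((|ξ|_E − 1)_+ / |ξ|_E) ξ. Then for all ξ, η ∈ ℝⁿ with |ξ|_E ≥ 1 + δ one has |ξ − η| ≤ 3 (R_E/r_E)² (1 + 1/δ) |G(ξ) − G(η)|. -/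
/-! With `p` the gauge of `E` and `b = max (p η) 1`, one has `G η = (1 - 1/b) η` and `p (G η) = b - 1`
for every `η`. Hence for `a = p ξ ≥ 1`,
`ξ - η = (G ξ - G η) + (ξ - η)/a + (1/a - 1/b) η`, where `|a - b| = |p (G ξ) - p (G η)|` is at most
`‖G ξ - G η‖ / r` because `p` is `1/r`-Lipschitz, and `‖η‖ ≤ R b`. This yields
`(a - 1) ‖ξ - η‖ ≤ (a + R/r) ‖G ξ - G η‖`, and `a ≥ 1 + δ` bounds `(a + R/r)/(a - 1)`. -/

open Set Metric

noncomputable def Gfun {n : ℕ} (E : Set (EuclideanSpace ℝ (Fin n)))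
    (ξ : EuclideanSpace ℝ (Fin n)) : EuclideanSpace ℝ (Fin n) :=
  (max (gauge E ξ - 1) 0 / gauge E ξ) • ξ

theorem abs_gauge_sub_gauge_le {F : Type*} [NormedAddCommGroup F] [NormedSpace ℝ F] {s : Set F}
    {r : ℝ} (hs : Convex ℝ s) (hr : 0 < r) (hball : ball (0 : F) r ⊆ s) (x y : F) :
    |gauge s x - gauge s y| ≤ ‖x - y‖ / r := by
  have hr' : 0 < r.toNNReal := Real.toNNReal_pos.mpr hr
  have := (hs.lipschitzWith_gauge hr' (by rwa [Real.coe_toNNReal r hr.le])).dist_le_mul x y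
  rwa [Real.dist_eq, dist_eq_norm, NNReal.coe_inv, Real.coe_toNNReal r hr.le, inv_mul_eq_div]
    at this

theorem norm_le_mul_gauge_of_subset_ball {F : Type*} [NormedAddCommGroup F] [NormedSpace ℝ F]
    {s : Set F} {R : ℝ} (hs : Absorbent ℝ s) (hR : 0 < R) (hball : s ⊆ ball (0 : F) R) (x : F) :
    ‖x‖ ≤ R * gauge s x := by
  rw [mul_comm, ← div_le_iff₀ hR]
  exact le_gauge_of_subset_closedBall hs hR.le (hball.trans ball_subset_closedBall)

section Gfun

variable {n : ℕ} (E : Set (EuclideanSpace ℝ (Fin n)))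

theorem Gfun_eq_smul (η : EuclideanSpace ℝ (Fin n)) :
    Gfun E η = (1 - (max (gauge E η) 1)⁻¹) • η := by
  rw [Gfun]
  congr 1
  rcases le_total (gauge E η) 1 with h | h
  · simp [max_eq_right h, max_eq_right (sub_nonpos.mpr h)]
  · rw [max_eq_left h, max_eq_left (sub_nonneg.mpr h)]
    field_simp

theorem gauge_Gfun (η : EuclideanSpace ℝ (Fin n)) :
    gauge E (Gfun E η) = max (gauge E η) 1 - 1 := by
  have hcoef : 0 ≤ 1 - (max (gauge E η) 1)⁻¹ :=
    sub_nonneg.mpr (inv_le_one_of_one_le₀ (le_max_right _ _))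
  rw [Gfun_eq_smul, gauge_smul_of_nonneg hcoef, smul_eq_mul]
  rcases le_total (gauge E η) 1 with h | h
  · simp [max_eq_right h]
  · rw [max_eq_left h]
    field_simp [(zero_lt_one.trans_le h).ne']

variable {E}

theorem gauge_sub_one_mul_norm_sub_le (hconv : Convex ℝ E) {r R : ℝ} (hr : 0 < r)
    (hball₁ : ball 0 r ⊆ E) (hball₂ : E ⊆ ball 0 R) {ξ : EuclideanSpace ℝ (Fin n)}
    (hξ : 1 ≤ gauge E ξ) (η : EuclideanSpace ℝ (Fin n)) :
    (gauge E ξ - 1) * ‖ξ - η‖ ≤ (gauge E ξ + R / r) * ‖Gfun E ξ - Gfun E η‖ := by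
  have hR : 0 < R := by simpa using hball₂ (hball₁ (mem_ball_self hr))
  set a := gauge E ξ
  set b := max (gauge E η) 1
  set D := ‖Gfun E ξ - Gfun E η‖
  have ha : 0 < a := zero_lt_one.trans_le hξ
  have hb : 0 < b := zero_lt_one.trans_le (le_max_right _ _)
  have hGξ : Gfun E ξ = (1 - a⁻¹) • ξ := by rw [Gfun_eq_smul, max_eq_left hξ]
  have hab : |a - b| ≤ D / r := by
    have := abs_gauge_sub_gauge_le hconv hr hball₁ (Gfun E ξ) (Gfun E η)
    rwa [gauge_Gfun, gauge_Gfun, max_eq_left hξ, sub_sub_sub_cancel_right] at this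
  have hη : ‖η‖ ≤ R * b :=
    (norm_le_mul_gauge_of_subset_ball ((absorbent_ball_zero hr).mono hball₁) hR hball₂ η).trans
      (mul_le_mul_of_nonneg_left (le_max_left _ _) hR.le)
  have hcoef : |a⁻¹ - b⁻¹| * ‖η‖ ≤ R / r * D / a := by
    calc |a⁻¹ - b⁻¹| * ‖η‖ = |a - b| / (a * b) * ‖η‖ := by
          rw [inv_sub_inv ha.ne' hb.ne', abs_div, abs_sub_comm, abs_of_pos (mul_pos ha hb)]
      _ ≤ D / r / (a * b) * (R * b) := by gcongr
      _ = R / r * D / a := by field_simp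
  have hsplit : ‖ξ - η‖ ≤ D + a⁻¹ * ‖ξ - η‖ + |a⁻¹ - b⁻¹| * ‖η‖ := by
    calc ‖ξ - η‖ = ‖(Gfun E ξ - Gfun E η) + a⁻¹ • (ξ - η) + (a⁻¹ - b⁻¹) • η‖ := by
          rw [hGξ, Gfun_eq_smul E η]; congr 1; module
      _ ≤ _ := by
          refine norm_add₃_le.trans_eq ?_
          rw [norm_smul, norm_smul, Real.norm_eq_abs, Real.norm_eq_abs, abs_of_pos (inv_pos.mpr ha)]
  have hmul := mul_le_mul_of_nonneg_left (hsplit.trans (add_le_add_right hcoef _)) ha.le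
  have hcancel : a * (D + a⁻¹ * ‖ξ - η‖ + R / r * D / a) = a * D + ‖ξ - η‖ + R / r * D := by
    field_simp
  linarith

end Gfun

theorem add_le_three_mul_sq_mul_sub_one {a ρ δ : ℝ} (hρ : 1 ≤ ρ) (hδ : 0 < δ) (ha : 1 + δ ≤ a) :
    a + ρ ≤ 3 * ρ ^ 2 * (1 + 1 / δ) * (a - 1) := by
  have ha_le : a ≤ (1 + 1 / δ) * (a - 1) := by
    rw [← sub_nonneg, show (1 + 1 / δ) * (a - 1) - a = (a - 1 - δ) / δ by field_simp; ring]
    exact div_nonneg (by linarith) hδ.le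
  have ha₁ : 1 ≤ a := by linarith
  calc a + ρ ≤ 3 * ρ ^ 2 * a := by
        nlinarith [mul_nonneg (sub_nonneg.2 hρ) (sub_nonneg.2 ha₁),
          mul_nonneg (mul_nonneg (sub_nonneg.2 hρ) (zero_le_one.trans hρ)) (zero_le_one.trans ha₁)]
    _ ≤ 3 * ρ ^ 2 * ((1 + 1 / δ) * (a - 1)) := by gcongr
    _ = 3 * ρ ^ 2 * (1 + 1 / δ) * (a - 1) := by ring

theorem Gfun_lower_lipschitz_general {n : ℕ} (E : Set (EuclideanSpace ℝ (Fin n)))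
    (hconv : Convex ℝ E)
    (r_E R_E : ℝ) (hr : 0 < r_E) (hrR : r_E ≤ R_E)
    (hball₁ : Metric.ball (0 : EuclideanSpace ℝ (Fin n)) r_E ⊆ E)
    (hball₂ : E ⊆ Metric.ball (0 : EuclideanSpace ℝ (Fin n)) R_E)
    (δ : ℝ) (hδ : 0 < δ) (ξ η : EuclideanSpace ℝ (Fin n)) (hξ : 1 + δ ≤ gauge E ξ) :
    ‖ξ - η‖ ≤ 3 * (R_E / r_E) ^ 2 * (1 + 1 / δ) * ‖Gfun E ξ - Gfun E η‖ := by
  have hρ : 1 ≤ R_E / r_E := (one_le_div hr).mpr hrR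
  have hpos : 0 < gauge E ξ - 1 := by linarith
  refine le_of_mul_le_mul_left ?_ hpos
  calc (gauge E ξ - 1) * ‖ξ - η‖
      ≤ (gauge E ξ + R_E / r_E) * ‖Gfun E ξ - Gfun E η‖ :=
        gauge_sub_one_mul_norm_sub_le hconv hr hball₁ hball₂ (by linarith) η
    _ ≤ 3 * (R_E / r_E) ^ 2 * (1 + 1 / δ) * (gauge E ξ - 1) * ‖Gfun E ξ - Gfun E η‖ := by
        gcongr; exact add_le_three_mul_sq_mul_sub_one hρ hδ hξ
    _ = (gauge E ξ - 1) * (3 * (R_E / r_E) ^ 2 * (1 + 1 / δ) * ‖Gfun E ξ - Gfun E η‖) := by ring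

theorem Gfun_lower_lipschitz {n : ℕ} (E : Set (EuclideanSpace ℝ (Fin n)))
    (hconv : Convex ℝ E) (hbdd : Bornology.IsBounded E) (h0 : (0 : EuclideanSpace ℝ (Fin n)) ∈ interior E)
    (r_E R_E : ℝ) (hr : 0 < r_E) (hrR : r_E ≤ R_E)
    (hball₁ : Metric.ball (0 : EuclideanSpace ℝ (Fin n)) r_E ⊆ E)
    (hball₂ : E ⊆ Metric.ball (0 : EuclideanSpace ℝ (Fin n)) R_E)
    (δ : ℝ) (hδ : 0 < δ) (ξ η : EuclideanSpace ℝ (Fin n)) (hξ : 1 + δ ≤ gauge E ξ) :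
    ‖ξ - η‖ ≤ 3 * (R_E / r_E) ^ 2 * (1 + 1 / δ) * ‖Gfun E ξ - Gfun E η‖ :=
  Gfun_lower_lipschitz_general E hconv r_E R_E hr hrR hball₁ hball₂ δ hδ ξ η hξ
end
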